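/- arXiv:0712.2871 — 2 statements merged into one kernel-verified Lean document; each statement's English description precedes it below -/
import Mathlib

section
/- Let (W,S) be a Coxeter system with S finite such that for every proper subset I ⊊ S the standard parabolic subgroup W_I is finite, and let k be the maximum over all proper subsets I ⊊ S of the maximal length of an element of W_I. If σ, v ∈ W satisfy ℓ(v) ≥ (k+1)·ℓ(σ), then σ ≤ v in the Bruhat order. -/
/-- The Bruhat order on a Coxeter group: `u ≤ w` iff some reduced word for `w`
has a sublist (subword) which is a reduced word for `u`. -/
def CoxeterSystem.bruhatLE {B W : Type*} [Group W] {M : CoxeterMatrix B}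
    (cs : CoxeterSystem M W) (u w : W) : Prop :=
  ∃ ω : List B, cs.IsReduced ω ∧ cs.wordProd ω = w ∧
    ∃ ω' : List B, ω'.Sublist ω ∧ cs.IsReduced ω' ∧ cs.wordProd ω' = u

/-!
A reduced word that avoids a generator `s` spells an element of the proper standard
parabolic subgroup `W_{S ∖ {s}}`, so its length is at most `k`. Hence in any reduced word `ω`
of length `> k` every generator `s` occurs within the first `k + 1` letters, and what follows
that occurrence is again reduced. If `s` is a left descent of `σ`, take this occurrence of `s`
as the first letter of the subword and find a subword for `sσ` in the remainder by induction
on `ℓ(σ)`: each letter of the subword uses up at most `k + 1` letters of `ω`.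
-/

namespace CoxeterSystem

variable {B W : Type*} [Group W] {M : CoxeterMatrix B} {cs : CoxeterSystem M W}

variable (cs) in
theorem wordProd_mem_closure_simple_image {I : Set B} {ω : List B} (hω : ∀ j ∈ ω, j ∈ I) :
    cs.wordProd ω ∈ Subgroup.closure (cs.simple '' I) :=
  list_prod_mem fun _ hx ↦ by
    obtain ⟨j, hj, rfl⟩ := List.mem_map.mp hx
    exact Subgroup.subset_closure ⟨j, hω j hj, rfl⟩

variable (cs) in
def ProperParabolicLengthLE (k : ℕ) : Prop :=
  ∀ I : Set B, I ≠ Set.univ → ∀ w ∈ Subgroup.closure (cs.simple '' I), cs.length w ≤ k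

variable {k : ℕ}

theorem IsReduced.length_le_of_notMem (hk : cs.ProperParabolicLengthLE k) {ω : List B}
    (hω : cs.IsReduced ω) {i : B} (hi : i ∉ ω) : ω.length ≤ k := by
  rw [← hω.eq]
  exact hk _ (Set.compl_ne_univ.mpr (Set.singleton_nonempty i)) _ <|
    cs.wordProd_mem_closure_simple_image fun j hj hji ↦ hi (hji ▸ hj)

theorem IsReduced.exists_eq_append_cons (hk : cs.ProperParabolicLengthLE k) {ω : List B}
    (hω : cs.IsReduced ω) (hlen : k < ω.length) (i : B) :
    ∃ l₁ l₂, ω = l₁ ++ i :: l₂ ∧ l₁.length ≤ k ∧ cs.IsReduced l₂ := by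
  have hi : i ∈ ω := by
    by_contra hi
    exact (hω.length_le_of_notMem hk hi).not_gt hlen
  obtain ⟨l₁, l₂, rfl, hil₁⟩ := List.eq_append_cons_of_mem hi
  have hl₁ : cs.IsReduced l₁ := by simpa using hω.take l₁.length
  have hl₂ : cs.IsReduced l₂ := by simpa using hω.drop (l₁.length + 1)
  exact ⟨l₁, l₂, rfl, hl₁.length_le_of_notMem hk hil₁, hl₂⟩

theorem exists_isReduced_sublist_of_mul_length_le (hk : cs.ProperParabolicLengthLE k) {σ : W}
    {ω : List B} (hω : cs.IsReduced ω) (hlen : (k + 1) * cs.length σ ≤ ω.length) :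
    ∃ χ : List B, χ.Sublist ω ∧ cs.IsReduced χ ∧ cs.wordProd χ = σ := by
  obtain ⟨n, hσ⟩ : ∃ n, cs.length σ = n := ⟨_, rfl⟩
  induction n generalizing σ ω with
  | zero =>
    refine ⟨[], List.nil_sublist ω, cs.length_one, ?_⟩
    rw [cs.length_eq_zero_iff.mp hσ, wordProd_nil]
  | succ n ih =>
    have hσ1 : σ ≠ 1 := by
      rintro rfl
      simp at hσ
    obtain ⟨i, hi⟩ := cs.exists_leftDescent_of_ne_one hσ1
    have hiσ : cs.length (cs.simple i * σ) = n := by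
      have := cs.isLeftDescent_iff.mp hi
      omega
    rw [hσ, Nat.mul_succ] at hlen
    obtain ⟨l₁, l₂, rfl, hl₁, hl₂⟩ := hω.exists_eq_append_cons hk (by omega) i
    rw [List.length_append, List.length_cons] at hlen
    obtain ⟨χ, hχω, hχ, hχσ⟩ := ih hl₂ (by rw [hiσ]; omega) hiσ
    have hprod : cs.wordProd (i :: χ) = σ := by
      rw [wordProd_cons, hχσ, simple_mul_simple_cancel_left]
    refine ⟨i :: χ, (hχω.cons_cons i).trans (List.sublist_append_right _ _), ?_, hprod⟩
    rw [IsReduced, hprod, hσ, List.length_cons, ← hχ.eq, hχσ, hiσ]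

end CoxeterSystem

theorem bruhat_le_of_length_ge_general
    {B W : Type*} [Group W] {M : CoxeterMatrix B} (cs : CoxeterSystem M W)
    (k : ℕ)
    (hk : IsGreatest {n : ℕ | ∃ I : Set B, I ≠ Set.univ ∧
      ∃ w ∈ Subgroup.closure (cs.simple '' I), cs.length w = n} k)
    (σ v : W) (h : (k + 1) * cs.length σ ≤ cs.length v) :
    cs.bruhatLE σ v := by
  obtain ⟨ω, hω, rfl⟩ := cs.exists_isReduced v
  obtain ⟨χ, hχω, hχ, hχσ⟩ := cs.exists_isReduced_sublist_of_mul_length_le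
    (fun I hI w hw ↦ hk.2 ⟨I, hI, w, hw, rfl⟩) hω (hω.eq ▸ h)
  exact ⟨ω, hω, rfl, χ, hχω, hχ, hχσ⟩

/-- If every proper standard parabolic subgroup of a Coxeter system (with finitely many
generators) is finite, and `k` is the maximum over all proper subsets `I ⊊ S` of the maximal
length of an element of `W_I`, then `ℓ(v) ≥ (k+1)·ℓ(σ)` implies `σ ≤ v` in Bruhat order. -/
theorem bruhat_le_of_length_ge
    {B W : Type*} [Group W] [Finite B] {M : CoxeterMatrix B} (cs : CoxeterSystem M W)
    (hpar : ∀ I : Set B, I ≠ Set.univ →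
      ((Subgroup.closure (cs.simple '' I) : Subgroup W) : Set W).Finite)
    (k : ℕ)
    (hk : IsGreatest {n : ℕ | ∃ I : Set B, I ≠ Set.univ ∧
      ∃ w ∈ Subgroup.closure (cs.simple '' I), cs.length w = n} k)
    (σ v : W) (h : (k + 1) * cs.length σ ≤ cs.length v) :
    cs.bruhatLE σ v :=
  bruhat_le_of_length_ge_general cs k hk σ v h
end

section
/- Let Φ be a finite reduced crystallographic root system with positive system Φ^+, let β ∈ Φ^+ be a simple root, and let λ be a coweight. Then ℓ^S(s_β λ) = ℓ^S(λ) − 1 if β(λ) < 0; s_β λ = λ (so ℓ^S(s_β λ) = ℓ^S(λ)) if β(λ) = 0; and ℓ^S(s_β λ) = ℓ^S(λ) + 1 if β(λ) > 0. -/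
/-!
Since `α(s_β λ) = (s_β α)(λ)`, it suffices that for a simple root `β` the reflection `s_β`
permutes `Φ⁺ \ {β}`: then `ℓ^S(s_β λ) - ℓ^S(λ) = f(-β(λ)) - f(β(λ)) = sign β(λ)`.
For a positive root `α ≠ β`, the root `s_β α` lies on the `β`-string through `α`. Root strings are
unbroken (this is taken from Mathlib's theory of root pairings, which applies because the coroots of
a finite root system are determined by the roots), and the string through `α` never leaves `Φ⁺`:
stepping up stays positive since `Φ⁺` is closed under addition, and stepping down stays positive
since `β` is indecomposable.
-/

open Module

/-- A finite reduced crystallographic root system, spanning the dual of the real vector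
space `V`, together with a chosen positive system.  Roots are linear functionals on `V`,
and `coroot` associates to each root its coroot in `V`. -/
structure PosRootSystem (V : Type*) [AddCommGroup V] [Module ℝ V] where
  /-- the set of roots -/
  roots : Finset (Dual ℝ V)
  /-- the set of positive roots -/
  pos : Finset (Dual ℝ V)
  /-- the coroot of a root -/
  coroot : Dual ℝ V → V
  pos_subset : pos ⊆ roots
  mem_roots_iff : ∀ α, α ∈ roots ↔ (α ∈ pos ∨ -α ∈ pos)
  neg_not_pos : ∀ α ∈ pos, -α ∉ pos
  add_mem_pos : ∀ α ∈ pos, ∀ β ∈ pos, α + β ∈ roots → α + β ∈ pos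
  root_coroot_two : ∀ α ∈ roots, α (coroot α) = 2
  crystallographic : ∀ α ∈ roots, ∀ β ∈ roots, ∃ n : ℤ, α (coroot β) = n
  reduced : ∀ α ∈ roots, ∀ c : ℝ, c • α ∈ roots → c = 1 ∨ c = -1
  reflect_mem : ∀ α ∈ roots, ∀ β ∈ roots, α - α (coroot β) • β ∈ roots
  span_top : Submodule.span ℝ (roots : Set (Dual ℝ V)) = ⊤

namespace PosRootSystem

variable {V : Type*} [AddCommGroup V] [Module ℝ V] (P : PosRootSystem V)

/-- `x` is a coweight: every root takes an integer value on it. -/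
def IsCoweight (x : V) : Prop := ∀ α ∈ P.roots, ∃ n : ℤ, α x = n

/-- The function `f(m) = -m` for `m ≤ 0` and `f(m) = m - 1` for `m > 0`. -/
noncomputable def lenAux (m : ℝ) : ℝ := if m ≤ 0 then -m else m - 1

/-- `ℓ^S(x) = Σ_{α ∈ Φ⁺} f(α(x))`, the length of the minimal coset representative of the
translation `x` in the affine Weyl group modulo the finite Weyl group. -/
noncomputable def lS (x : V) : ℝ := ∑ α ∈ P.pos, lenAux (α x)

/-- The linear reflection `s_β x = x - β(x)·β^∨`. -/
def sRefl (β : Dual ℝ V) (x : V) : V := x - β x • P.coroot β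

/-- The affine reflection `r_β x = s_β x + β^∨` in the hyperplane `β = 1`. -/
def rRefl (β : Dual ℝ V) (x : V) : V := P.sRefl β x + P.coroot β

/-- `(α, α')` is a `β`-positive pair: `α, α'` are positive roots with `α(β^∨) < 0`
and `s_β α = α'`. -/
def IsPosPair (β α α' : Dual ℝ V) : Prop :=
  α ∈ P.pos ∧ α' ∈ P.pos ∧ α (P.coroot β) < 0 ∧ α - α (P.coroot β) • β = α'

/-- `(α, α')` is a `β`-negative pair: `α, α'` are positive roots with `s_β α = -α'`. -/
def IsNegPair (β α α' : Dual ℝ V) : Prop :=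
  α ∈ P.pos ∧ α' ∈ P.pos ∧ α - α (P.coroot β) • β = -α'

/-- The opposite sign condition for `(β, x)`: the two members of every `β`-negative pair
take values of strictly opposite signs on `x`. -/
def OppositeSignCondition (β : Dual ℝ V) (x : V) : Prop :=
  ∀ α α' : Dual ℝ V, P.IsNegPair β α α' →
    (α x < 0 ∧ 0 < α' x) ∨ (0 < α x ∧ α' x < 0)

end PosRootSystem

/-- A simple root relative to the positive system: an indecomposable positive root. -/
def PosRootSystem.IsSimpleRoot {V : Type*} [AddCommGroup V] [Module ℝ V]
    (P : PosRootSystem V) (β : Module.Dual ℝ V) : Prop :=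
  β ∈ P.pos ∧ ∀ γ ∈ P.pos, ∀ δ ∈ P.pos, β ≠ γ + δ

open Set

namespace PosRootSystem

variable {V : Type*} [AddCommGroup V] [Module ℝ V] (P : PosRootSystem V)

lemma ne_zero_of_mem_roots {α : Dual ℝ V} (hα : α ∈ P.roots) : α ≠ 0 := by
  rintro rfl
  simpa using P.root_coroot_two 0 hα

lemma finite (P : PosRootSystem V) : Module.Finite ℝ V :=
  (Module.finite_dual_iff ℝ).mp ⟨⟨P.roots, P.span_top⟩⟩

def reflection (β : Dual ℝ V) : Dual ℝ V →ₗ[ℝ] Dual ℝ V :=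
  preReflection β (Dual.eval ℝ V (P.coroot β))

lemma reflection_apply (β φ : Dual ℝ V) :
    P.reflection β φ = φ - φ (P.coroot β) • β := rfl

lemma mapsTo_reflection {β : Dual ℝ V} (hβ : β ∈ P.roots) :
    MapsTo (P.reflection β) P.roots P.roots :=
  fun α hα => P.reflect_mem α hα β hβ

lemma coroot_injOn : InjOn P.coroot P.roots := by
  intro α hα β hβ h
  have : IsAddTorsionFree (Dual ℝ V) := .of_isTorsionFree ℝ _
  have h2 := P.root_coroot_two
  refine eq_of_mapsTo_reflection_of_mem (f := Dual.eval ℝ V (P.coroot α))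
    (g := Dual.eval ℝ V (P.coroot β)) P.roots.finite_toSet (h2 α hα) (h2 β hβ) ?_ ?_
    (P.mapsTo_reflection hα) (P.mapsTo_reflection hβ) hβ
  · simp [← h, h2 α hα]
  · simp [h, h2 β hβ]

noncomputable def toRootPairing : RootPairing P.roots ℝ (Dual ℝ V) V :=
  haveI := P.finite
  RootPairing.mk'' LinearMap.id (Function.Embedding.subtype _)
    ⟨fun α => P.coroot α, fun α β h => Subtype.ext (P.coroot_injOn α.2 β.2 h)⟩
    (fun α => P.root_coroot_two α α.2)
    (by
      rintro α - ⟨β, rfl⟩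
      exact ⟨⟨_, P.reflect_mem β β.2 α α.2⟩, rfl⟩)
    (by simpa using P.span_top)

@[simp]
lemma toRootPairing_root (α : P.roots) : P.toRootPairing.root α = α := rfl

instance : P.toRootPairing.IsCrystallographic where
  exists_value α β := by
    obtain ⟨n, hn⟩ := P.crystallographic α α.2 β β.2
    exact ⟨n, hn.symm⟩

instance : P.toRootPairing.IsReduced where
  eq_or_eq_neg α β h := by
    change ¬LinearIndependent ℝ ![(α : Dual ℝ V), β] at h
    change (α : Dual ℝ V) = β ∨ (α : Dual ℝ V) = -β
    obtain ⟨c, hc⟩ : ∃ c : ℝ, c • (α : Dual ℝ V) = β := by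
      simpa [LinearIndependent.pair_iff' (P.ne_zero_of_mem_roots α.2)] using h
    rcases P.reduced α α.2 c (hc ▸ β.2) with rfl | rfl
    · simp [← hc]
    · exact Or.inr (by rw [← hc]; module)

lemma add_smul_mem_roots_of_mem_uIcc {α β : Dual ℝ V} (hα : α ∈ P.roots) (hβ : β ∈ P.roots)
    (hne : α ≠ β) (hne' : α ≠ -β) {m z : ℤ} (hm : α + (m : ℝ) • β ∈ P.roots)
    (hz : z ∈ uIcc 0 m) : α + (z : ℝ) • β ∈ P.roots := by
  let i : P.roots := ⟨β, hβ⟩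
  let j : P.roots := ⟨α, hα⟩
  have hli : LinearIndependent ℝ ![P.toRootPairing.root i, P.toRootPairing.root j] :=
    RootPairing.IsReduced.linearIndependent _ (fun h => hne (congrArg Subtype.val h).symm)
      (fun h => hne' (neg_eq_iff_eq_neg.mp h.symm))
  have hchain (z : ℤ) : α + (z : ℝ) • β ∈ P.roots ↔
      z ∈ Icc (-(P.toRootPairing.chainBotCoeff i j : ℤ)) (P.toRootPairing.chainTopCoeff i j) := by
    have := P.toRootPairing.root_add_zsmul_mem_range_iff hli (z := z)
    rw [Int.cast_smul_eq_zsmul ℝ z β]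
    simpa [i, j] using this
  exact (hchain z).2 <| uIcc_subset_Icc ((hchain 0).1 (by simpa using hα)) ((hchain m).1 hm) hz

lemma reflection_self {β : Dual ℝ V} (hβ : β ∈ P.roots) : P.reflection β β = -β :=
  preReflection_apply_self (P.root_coroot_two β hβ)

lemma involutive_reflection {β : Dual ℝ V} (hβ : β ∈ P.roots) :
    Function.Involutive (P.reflection β) :=
  involutive_preReflection (P.root_coroot_two β hβ)

lemma apply_sRefl (β φ : Dual ℝ V) (x : V) : φ (P.sRefl β x) = P.reflection β φ x := by
  simp only [sRefl, reflection_apply, map_sub, map_smul, LinearMap.sub_apply,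
    LinearMap.smul_apply, smul_eq_mul, mul_comm]

lemma lenAux_neg (m : ℝ) : lenAux (-m) = lenAux m + Real.sign m := by
  rcases lt_trichotomy m 0 with h | rfl | h
  · simp [lenAux, Real.sign_of_neg h, h.le, not_le.2 (neg_pos.2 h)]
    ring
  · simp [lenAux]
  · simp [lenAux, Real.sign_of_pos h, (neg_neg_of_pos h).le, not_le.2 h]

variable {P} {β : Dual ℝ V}

namespace IsSimpleRoot

lemma sub_mem_pos (hβ : P.IsSimpleRoot β) {γ : Dual ℝ V} (hγ : γ ∈ P.pos)
    (h : γ - β ∈ P.roots) : γ - β ∈ P.pos := by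
  rcases (P.mem_roots_iff _).1 h with h | h
  · exact h
  · rw [neg_sub] at h
    exact (hβ.2 γ hγ _ h (by abel)).elim

lemma add_smul_mem_pos (hβ : P.IsSimpleRoot β) {α : Dual ℝ V} (hα : α ∈ P.pos) (hne : α ≠ β)
    {m : ℤ} (hm : α + (m : ℝ) • β ∈ P.roots) : α + (m : ℝ) • β ∈ P.pos := by
  have hne' : α ≠ -β := fun h => P.neg_not_pos β hβ.1 (h ▸ hα)
  have hstring {z : ℤ} (hz : z ∈ uIcc 0 m) : α + (z : ℝ) • β ∈ P.roots :=
    P.add_smul_mem_roots_of_mem_uIcc (P.pos_subset hα) (P.pos_subset hβ.1) hne hne' hm hz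
  suffices ∀ z : ℤ, z ∈ uIcc 0 m → α + (z : ℝ) • β ∈ P.pos from this m right_mem_uIcc
  intro z
  induction z using Int.induction_on with
  | zero => exact fun _ => by simpa using hα
  | succ k ih =>
    intro hz
    have hk : α + ((k + 1 : ℤ) : ℝ) • β = (α + ((k : ℤ) : ℝ) • β) + β := by push_cast; module
    rw [hk]
    refine P.add_mem_pos _ (ih ?_) β hβ.1 (hk ▸ hstring hz)
    rw [mem_uIcc] at hz ⊢
    omega
  | pred k ih =>
    intro hz
    have hk : α + ((-k - 1 : ℤ) : ℝ) • β = (α + ((-k : ℤ) : ℝ) • β) - β := by push_cast; module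
    rw [hk]
    refine hβ.sub_mem_pos (ih ?_) (hk ▸ hstring hz)
    rw [mem_uIcc] at hz ⊢
    omega

lemma reflection_mem_pos (hβ : P.IsSimpleRoot β) {α : Dual ℝ V} (hα : α ∈ P.pos) (hne : α ≠ β) :
    P.reflection β α ∈ P.pos := by
  obtain ⟨n, hn⟩ := P.crystallographic α (P.pos_subset hα) β (P.pos_subset hβ.1)
  have h : P.reflection β α = α + ((-n : ℤ) : ℝ) • β := by
    rw [reflection_apply, hn]
    push_cast
    module
  rw [h]
  exact hβ.add_smul_mem_pos hα hne (h ▸ P.mapsTo_reflection (P.pos_subset hβ.1) (P.pos_subset hα))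

lemma mapsTo_reflection_erase [DecidableEq (Dual ℝ V)] (hβ : P.IsSimpleRoot β) :
    MapsTo (P.reflection β) (P.pos.erase β : Set (Dual ℝ V)) (P.pos.erase β) := by
  intro α hα
  obtain ⟨hne, hα⟩ := Finset.mem_erase.1 hα
  refine Finset.mem_erase.2 ⟨fun h => P.neg_not_pos β hβ.1 ?_, hβ.reflection_mem_pos hα hne⟩
  have h' := congrArg (P.reflection β) h
  rw [P.involutive_reflection (P.pos_subset hβ.1), P.reflection_self (P.pos_subset hβ.1)] at h'
  rwa [← h']

lemma lS_sRefl (hβ : P.IsSimpleRoot β) (x : V) :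
    P.lS (P.sRefl β x) = P.lS x + Real.sign (β x) := by
  classical
  have hinv := P.involutive_reflection (P.pos_subset hβ.1)
  have hrest : ∑ α ∈ P.pos.erase β, lenAux (α (P.sRefl β x)) =
      ∑ α ∈ P.pos.erase β, lenAux (α x) :=
    Finset.sum_nbij' (P.reflection β) (P.reflection β) hβ.mapsTo_reflection_erase
      hβ.mapsTo_reflection_erase (fun α _ => hinv α) (fun α _ => hinv α)
      (fun α _ => by rw [apply_sRefl])
  rw [lS, lS, ← Finset.sum_erase_add _ _ hβ.1, ← Finset.sum_erase_add _ _ hβ.1, hrest,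
    apply_sRefl, P.reflection_self (P.pos_subset hβ.1), LinearMap.neg_apply, lenAux_neg]
  ring

end IsSimpleRoot

end PosRootSystem

theorem lS_sRefl_simple_general {V : Type*} [AddCommGroup V] [Module ℝ V]
    (P : PosRootSystem V) (β : Module.Dual ℝ V) (hβ : P.IsSimpleRoot β) (x : V) :
    (β x < 0 → P.lS (P.sRefl β x) = P.lS x - 1) ∧
    (β x = 0 → P.sRefl β x = x) ∧
    (0 < β x → P.lS (P.sRefl β x) = P.lS x + 1) := by
  refine ⟨fun h => ?_, fun h => ?_, fun h => ?_⟩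
  · rw [hβ.lS_sRefl, Real.sign_of_neg h]
    ring
  · rw [PosRootSystem.sRefl, h, zero_smul, sub_zero]
  · rw [hβ.lS_sRefl, Real.sign_of_pos h]

/-- For a simple root `β`: `ℓ^S(s_β λ) = ℓ^S(λ) − 1` if `β(λ) < 0`; `s_β λ = λ` if
`β(λ) = 0`; and `ℓ^S(s_β λ) = ℓ^S(λ) + 1` if `β(λ) > 0`. -/
theorem lS_sRefl_simple {V : Type*} [AddCommGroup V] [Module ℝ V]
    (P : PosRootSystem V) (β : Module.Dual ℝ V) (hβ : P.IsSimpleRoot β) (x : V)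
    (hx : P.IsCoweight x) :
    (β x < 0 → P.lS (P.sRefl β x) = P.lS x - 1) ∧
    (β x = 0 → P.sRefl β x = x) ∧
    (0 < β x → P.lS (P.sRefl β x) = P.lS x + 1) :=
  lS_sRefl_simple_general P β hβ x
end
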